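/- Quorum-based global knowledge: suppose each process i has a quorum Q_i from a coterie, and each process k notifies every member of Q_k of its state. Formally, suppose procsInCS_j = {k ∈ R_j | state k = InCS} for every j, where R_j = {k | j ∈ Q_k}. Then for any process i, the union ⋃_{j ∈ Q_i} procsInCS_j equals the full set {k ∈ V | state k = InCS}. -/

import Mathlib

/-- Every process `k` notifies all of `Q k`, and `Q k` meets `Q i`, so some member of `Q i`
hears from `k`. -/
theorem Finset.biUnion_filter_mem_eq_filter {V : Type*} [Fintype V] [DecidableEq V]
    (Q : V → Finset V) (hQ : ∀ i k, (Q i ∩ Q k).Nonempty) (p : V → Prop) [DecidablePred p]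
    (i : V) :
    (Q i).biUnion (fun j => univ.filter fun k => j ∈ Q k ∧ p k) = univ.filter p := by
  ext k
  simp only [mem_biUnion, mem_filter, mem_univ, true_and]
  constructor
  · rintro ⟨j, -, -, hk⟩
    exact hk
  · intro hk
    obtain ⟨j, hj⟩ := hQ i k
    rw [mem_inter] at hj
    exact ⟨j, hj.1, hj.2, hk⟩

theorem quorum_global_knowledge_general {V : Type*} [Fintype V] [DecidableEq V]
    (𝒞 : Finset (Finset V))
    (hInter : ∀ Q₁ ∈ 𝒞, ∀ Q₂ ∈ 𝒞, (Q₁ ∩ Q₂).Nonempty)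
    (Q : V → Finset V) (hQ : ∀ k, Q k ∈ 𝒞)
    (state : V → Bool)
    (R : V → Finset V) (hR : ∀ j, R j = Finset.univ.filter (fun k => j ∈ Q k))
    (procsInCS : V → Finset V)
    (hprocs : ∀ j, procsInCS j = (R j).filter (fun k => state k = true))
    (i : V) :
    (Q i).biUnion procsInCS = Finset.univ.filter (fun k => state k = true) := by
  have hprocs' : procsInCS = fun j => Finset.univ.filter fun k => j ∈ Q k ∧ state k = true := by
    funext j
    rw [hprocs, hR, Finset.filter_filter]
  rw [hprocs']
  exact Finset.biUnion_filter_mem_eq_filter Q (fun i k => hInter _ (hQ i) _ (hQ k)) _ i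

/-- Quorum-based global knowledge: the union of `procsInCS_j` over `j ∈ Q_i`
equals the set of all InCS processes. -/
theorem quorum_global_knowledge {V : Type*} [Fintype V] [DecidableEq V]
    (𝒞 : Finset (Finset V))
    (hInter : ∀ Q₁ ∈ 𝒞, ∀ Q₂ ∈ 𝒞, (Q₁ ∩ Q₂).Nonempty)
    (hMin : ∀ Q₁ ∈ 𝒞, ∀ Q₂ ∈ 𝒞, Q₁ ≠ Q₂ → ¬ Q₁ ⊆ Q₂)
    (Q : V → Finset V) (hQ : ∀ k, Q k ∈ 𝒞)
    (state : V → Bool)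
    (R : V → Finset V) (hR : ∀ j, R j = Finset.univ.filter (fun k => j ∈ Q k))
    (procsInCS : V → Finset V)
    (hprocs : ∀ j, procsInCS j = (R j).filter (fun k => state k = true))
    (i : V) :
    (Q i).biUnion procsInCS = Finset.univ.filter (fun k => state k = true) :=
  quorum_global_knowledge_general 𝒞 hInter Q hQ state R hR procsInCS hprocs i
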